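/- arXiv:2503.07848 — 2 statements merged into one kernel-verified Lean document; each statement's English description precedes it below -/
import Mathlib

section
/- Let l be a positive integer, H a real symmetric positive definite l×l matrix, δ > 0 a real number, b ∈ ℝ^l with b ≠ 0, and c ∈ ℝ. Then the function x ↦ c + bᵀx attains a minimum over the set {x ∈ ℝ^l : (1/2)xᵀHx ≤ δ}; this minimum value equals c − √(2δ · bᵀH⁻¹b), and it is attained uniquely at the point x* = −(1/φ*) H⁻¹ b, where φ* = √(bᵀH⁻¹b / (2δ)). -/
open Matrix

/-!
Put `β = bᵀH⁻¹b > 0` and `x* = −(1/φ*) H⁻¹b`, so that `b = −φ* H x*` and `x*ᵀHx* = 2δ`: the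
minimiser lies on the boundary of the ellipsoid and `bᵀx = −φ* ⟨x*, x⟩_H` for every `x`.
Expanding `(x − x*)ᵀH(x − x*) ≥ 0` gives `2⟨x*, x⟩_H ≤ xᵀHx + 2δ ≤ 4δ` on the ellipsoid, with
equality only at `x = x*`; hence `bᵀx ≥ −2δφ* = bᵀx*`, and `2δφ* = √(2δβ)`.
-/

namespace Matrix

variable {n R : Type*}

theorem PosDef.isSymm {A : Matrix n n ℝ} (hA : A.PosDef) : A.IsSymm :=
  isHermitian_iff_isSymm.mp hA.isHermitian

variable [Fintype n]

theorem IsSymm.dotProduct_mulVec_comm [CommSemiring R] {A : Matrix n n R} (hA : A.IsSymm)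
    (x y : n → R) : x ⬝ᵥ A *ᵥ y = y ⬝ᵥ A *ᵥ x := by
  rw [← dotProduct_transpose_mulVec, hA.eq]

theorem IsSymm.dotProduct_mulVec_sub_sub [CommRing R] {A : Matrix n n R} (hA : A.IsSymm)
    (x y : n → R) :
    (x - y) ⬝ᵥ A *ᵥ (x - y) = x ⬝ᵥ A *ᵥ x + y ⬝ᵥ A *ᵥ y - 2 * (y ⬝ᵥ A *ᵥ x) := by
  simp only [mulVec_sub, sub_dotProduct, dotProduct_sub, hA.dotProduct_mulVec_comm x y]
  ring

namespace PosDef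

variable {A : Matrix n n ℝ}

theorem two_mul_dotProduct_mulVec_le (hA : A.PosDef) (x y : n → ℝ) :
    2 * (y ⬝ᵥ A *ᵥ x) ≤ x ⬝ᵥ A *ᵥ x + y ⬝ᵥ A *ᵥ y := by
  have := hA.posSemidef.dotProduct_mulVec_nonneg (x - y)
  rw [star_trivial, hA.isSymm.dotProduct_mulVec_sub_sub] at this
  linarith

theorem eq_of_two_mul_dotProduct_mulVec_eq (hA : A.PosDef) {x y : n → ℝ}
    (h : 2 * (y ⬝ᵥ A *ᵥ x) = x ⬝ᵥ A *ᵥ x + y ⬝ᵥ A *ᵥ y) : x = y := by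
  by_contra hxy
  have := hA.dotProduct_mulVec_pos (sub_ne_zero.mpr hxy)
  rw [star_trivial, hA.isSymm.dotProduct_mulVec_sub_sub] at this
  linarith

end PosDef

theorem mulVec_smul_inv_mulVec [DecidableEq n] [CommRing R] {A : Matrix n n R}
    (hA : IsUnit A.det) (t : R) (b : n → R) : A *ᵥ (t • A⁻¹ *ᵥ b) = t • b := by
  rw [mulVec_smul, mulVec_mulVec, mul_nonsing_inv A hA, one_mulVec]

end Matrix

theorem Real.one_div_sqrt_div_sq_mul {β δ : ℝ} (hβ : 0 < β) (hδ : 0 < δ) :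
    (1 / √(β / (2 * δ))) ^ 2 * β = 2 * δ := by
  rw [div_pow, Real.sq_sqrt (by positivity)]
  field_simp

theorem Real.div_sqrt_div {β δ : ℝ} (hβ : 0 < β) (hδ : 0 < δ) :
    β / √(β / (2 * δ)) = √(2 * δ * β) := by
  rw [div_eq_iff (by positivity), ← Real.sqrt_mul (by positivity),
    show 2 * δ * β * (β / (2 * δ)) = β ^ 2 by field_simp, Real.sqrt_sq hβ.le]

theorem stmt_0_general (l : ℕ) (H : Matrix (Fin l) (Fin l) ℝ)
    (hH : H.PosDef) (δ : ℝ) (hδ : 0 < δ)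
    (b : Fin l → ℝ) (hb : b ≠ 0) (c : ℝ) :
    letI φstar : ℝ := Real.sqrt ((b ⬝ᵥ H⁻¹ *ᵥ b) / (2 * δ))
    letI xstar : Fin l → ℝ := -(1 / φstar) • (H⁻¹ *ᵥ b)
    (1 / 2) * (xstar ⬝ᵥ H *ᵥ xstar) ≤ δ ∧
      c + b ⬝ᵥ xstar = c - Real.sqrt (2 * δ * (b ⬝ᵥ H⁻¹ *ᵥ b)) ∧
      ∀ x : Fin l → ℝ, (1 / 2) * (x ⬝ᵥ H *ᵥ x) ≤ δ →
        (c + b ⬝ᵥ xstar ≤ c + b ⬝ᵥ x ∧ (c + b ⬝ᵥ x = c + b ⬝ᵥ xstar → x = xstar)) := by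
  set β := b ⬝ᵥ H⁻¹ *ᵥ b
  set φ := √(β / (2 * δ))
  set xstar := -(1 / φ) • (H⁻¹ *ᵥ b)
  have hβ : 0 < β := by simpa using hH.inv.dotProduct_mulVec_pos hb
  have hφ : 0 < φ := Real.sqrt_pos.mpr (by positivity)
  have hHx : H *ᵥ xstar = -(1 / φ) • b := mulVec_smul_inv_mulVec hH.det_pos.ne'.isUnit _ b
  have hlin : ∀ x, b ⬝ᵥ x = -φ * (xstar ⬝ᵥ H *ᵥ x) := fun x => by
    rw [hH.isSymm.dotProduct_mulVec_comm, hHx, dotProduct_smul, dotProduct_comm, smul_eq_mul]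
    field_simp
  have hquad : xstar ⬝ᵥ H *ᵥ xstar = 2 * δ := by
    rw [hHx, dotProduct_smul, smul_dotProduct, dotProduct_comm, smul_eq_mul, smul_eq_mul,
      ← Real.one_div_sqrt_div_sq_mul hβ hδ]
    ring
  have hval : b ⬝ᵥ xstar = -√(2 * δ * β) := by
    rw [dotProduct_smul, smul_eq_mul, ← Real.div_sqrt_div hβ hδ]
    ring
  refine ⟨by linarith, by rw [hval]; ring, fun x hx => ?_⟩
  have hle : xstar ⬝ᵥ H *ᵥ x ≤ 2 * δ := by
    linarith [hH.two_mul_dotProduct_mulVec_le x xstar]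
  refine ⟨?_, fun heq => hH.eq_of_two_mul_dotProduct_mulVec_eq ?_⟩
  · rw [hlin x, hlin xstar, hquad]
    linarith [mul_le_mul_of_nonneg_left hle hφ.le]
  · rw [hlin x, hlin xstar, hquad] at heq
    have hx_eq : xstar ⬝ᵥ H *ᵥ x = 2 * δ := mul_left_cancel₀ hφ.ne' (by linarith)
    exact (hH.two_mul_dotProduct_mulVec_le x xstar).antisymm (by linarith)

/-- Infeasible-case trust-region subproblem: the linear function `x ↦ c + bᵀx` attains a
minimum over the ellipsoid `{x : (1/2) xᵀHx ≤ δ}`, the minimum value is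
`c − √(2δ · bᵀH⁻¹b)`, and it is attained uniquely at `x* = −(1/φ*) H⁻¹ b` with
`φ* = √(bᵀH⁻¹b / (2δ))`. -/
theorem stmt_0 (l : ℕ) (hl : 0 < l) (H : Matrix (Fin l) (Fin l) ℝ)
    (hHsymm : H.IsSymm) (hH : H.PosDef) (δ : ℝ) (hδ : 0 < δ)
    (b : Fin l → ℝ) (hb : b ≠ 0) (c : ℝ) :
    letI φstar : ℝ := Real.sqrt ((b ⬝ᵥ H⁻¹ *ᵥ b) / (2 * δ))
    letI xstar : Fin l → ℝ := -(1 / φstar) • (H⁻¹ *ᵥ b)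
    (1 / 2) * (xstar ⬝ᵥ H *ᵥ xstar) ≤ δ ∧
      c + b ⬝ᵥ xstar = c - Real.sqrt (2 * δ * (b ⬝ᵥ H⁻¹ *ᵥ b)) ∧
      ∀ x : Fin l → ℝ, (1 / 2) * (x ⬝ᵥ H *ᵥ x) ≤ δ →
        (c + b ⬝ᵥ xstar ≤ c + b ⬝ᵥ x ∧ (c + b ⬝ᵥ x = c + b ⬝ᵥ xstar → x = xstar)) :=
  stmt_0_general l H hH δ hδ b hb c
end

section
/- Let l be a positive integer, H a real symmetric positive definite l×l matrix, δ > 0 a real number, g, b0, b1 ∈ ℝ^l, c0, c1 ∈ ℝ, and λ > 0. Define q = gᵀH⁻¹g, r0 = gᵀH⁻¹b0, r1 = gᵀH⁻¹b1, s0 = b0ᵀH⁻¹b0, s1 = b1ᵀH⁻¹b1, t = b0ᵀH⁻¹b1, assume s0 s1 − t² ≠ 0, and set ν0* = (λ(s1 c0 − t c1) + t r1 − s1 r0)/(s0 s1 − t²) and ν1* = (λ(s0 c1 − t c0) + t r0 − s0 r1)/(s0 s1 − t²). Then the dual function value D(λ, ν0*, ν1*) = −(1/(2λ))(g + ν0*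 b0 + ν1* b1)ᵀH⁻¹(g + ν0* b0 + ν1* b1) + ν0* c0 + ν1* c1 − λδ equals f₁(λ) = (1/(2λ))((s1 r0² + s0 r1² − 2 t r0 r1)/(s0 s1 − t²) − q) + (λ/2)((s1 c0² + s0 c1² − 2 t c0 c1)/(s0 s1 − t²) − 2δ) + (t r1 c0 + t r0 c1 − s1 r0 c0 − s0 r1 c1)/(s0 s1 − t²). -/
open Matrix

/-
The quadratic form `wᵀH⁻¹w`, `w = g + ν0 b0 + ν1 b1`, expands by bilinearity and symmetry of
`H⁻¹` into the six Gram quantities `q, r0, r1, s0, s1, t`. Substituting the stationary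
multipliers `(ν0*, ν1*)` of `D(λ, ·, ·)` leaves a rational identity in these scalars, valid as
soon as `λ ≠ 0` and `s0 s1 - t² ≠ 0`.
-/

section QuadraticForm

variable {R n : Type*} [CommRing R] [Fintype n] {M : Matrix n n R}

theorem Matrix.IsSymm.dotProduct_mulVec_comm_s8 (hM : M.IsSymm) (x y : n → R) :
    x ⬝ᵥ M *ᵥ y = y ⬝ᵥ M *ᵥ x := by
  rw [dotProduct_mulVec, ← mulVec_transpose, hM.eq, dotProduct_comm]

theorem Matrix.IsSymm.dotProduct_mulVec_add_smul_add_smul (hM : M.IsSymm) (g u v : n → R)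
    (a b : R) :
    (g + a • u + b • v) ⬝ᵥ M *ᵥ (g + a • u + b • v) =
      g ⬝ᵥ M *ᵥ g + 2 * a * (g ⬝ᵥ M *ᵥ u) + 2 * b * (g ⬝ᵥ M *ᵥ v) +
        a ^ 2 * (u ⬝ᵥ M *ᵥ u) + b ^ 2 * (v ⬝ᵥ M *ᵥ v) + 2 * a * b * (u ⬝ᵥ M *ᵥ v) := by
  simp only [mulVec_add, mulVec_smul, dotProduct_add, add_dotProduct, smul_dotProduct,
    dotProduct_smul, smul_eq_mul]
  rw [hM.dotProduct_mulVec_comm_s8 u g, hM.dotProduct_mulVec_comm_s8 v g,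
    hM.dotProduct_mulVec_comm_s8 v u]
  ring

end QuadraticForm

theorem dual_at_stationary_multipliers_eq {q r0 r1 s0 s1 t c0 c1 lam δ : ℝ}
    (hdet : s0 * s1 - t ^ 2 ≠ 0) (hlam : lam ≠ 0) :
    let ν0 := (lam * (s1 * c0 - t * c1) + t * r1 - s1 * r0) / (s0 * s1 - t ^ 2)
    let ν1 := (lam * (s0 * c1 - t * c0) + t * r0 - s0 * r1) / (s0 * s1 - t ^ 2)
    (-(1 / (2 * lam)) * (q + 2 * ν0 * r0 + 2 * ν1 * r1 + ν0 ^ 2 * s0 + ν1 ^ 2 * s1 +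
        2 * ν0 * ν1 * t) + ν0 * c0 + ν1 * c1 - lam * δ =
      (1 / (2 * lam)) *
          ((s1 * r0 ^ 2 + s0 * r1 ^ 2 - 2 * t * r0 * r1) / (s0 * s1 - t ^ 2) - q) +
        (lam / 2) *
          ((s1 * c0 ^ 2 + s0 * c1 ^ 2 - 2 * t * c0 * c1) / (s0 * s1 - t ^ 2) - 2 * δ) +
        (t * r1 * c0 + t * r0 * c1 - s1 * r0 * c0 - s0 * r1 * c1) / (s0 * s1 - t ^ 2)) := by
  dsimp only
  -- `field_simp` normalises the determinant to this form
  have hdet' : s1 * s0 - t ^ 2 ≠ 0 := by rwa [mul_comm]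
  field_simp
  ring

theorem stmt_8_general (l : ℕ) (H : Matrix (Fin l) (Fin l) ℝ)
    (hHsymm : H.IsSymm) (δ : ℝ)
    (g b0 b1 : Fin l → ℝ) (c0 c1 : ℝ) (lam : ℝ) (hlam : 0 < lam) :
    letI q : ℝ := g ⬝ᵥ H⁻¹ *ᵥ g
    letI r0 : ℝ := g ⬝ᵥ H⁻¹ *ᵥ b0
    letI r1 : ℝ := g ⬝ᵥ H⁻¹ *ᵥ b1
    letI s0 : ℝ := b0 ⬝ᵥ H⁻¹ *ᵥ b0
    letI s1 : ℝ := b1 ⬝ᵥ H⁻¹ *ᵥ b1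
    letI t : ℝ := b0 ⬝ᵥ H⁻¹ *ᵥ b1
    s0 * s1 - t ^ 2 ≠ 0 →
    letI ν0star : ℝ := (lam * (s1 * c0 - t * c1) + t * r1 - s1 * r0) / (s0 * s1 - t ^ 2)
    letI ν1star : ℝ := (lam * (s0 * c1 - t * c0) + t * r0 - s0 * r1) / (s0 * s1 - t ^ 2)
    letI w : Fin l → ℝ := g + ν0star • b0 + ν1star • b1
    (-(1 / (2 * lam)) * (w ⬝ᵥ H⁻¹ *ᵥ w) + ν0star * c0 + ν1star * c1 - lam * δ =
      (1 / (2 * lam)) *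
          ((s1 * r0 ^ 2 + s0 * r1 ^ 2 - 2 * t * r0 * r1) / (s0 * s1 - t ^ 2) - q) +
        (lam / 2) *
          ((s1 * c0 ^ 2 + s0 * c1 ^ 2 - 2 * t * c0 * c1) / (s0 * s1 - t ^ 2) - 2 * δ) +
        (t * r1 * c0 + t * r0 * c1 - s1 * r0 * c0 - s0 * r1 * c1) / (s0 * s1 - t ^ 2)) := by
  intro hdet
  rw [hHsymm.inv.dotProduct_mulVec_add_smul_add_smul]
  exact dual_at_stationary_multipliers_eq hdet hlam.ne'

/-- The dual function evaluated at the case-1 multipliers `(ν0*, ν1*)` equals the paper's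
case-1 dual function `f₁(λ)` (both linear constraints active). -/
theorem stmt_8 (l : ℕ) (hl : 0 < l) (H : Matrix (Fin l) (Fin l) ℝ)
    (hHsymm : H.IsSymm) (hH : H.PosDef) (δ : ℝ) (hδ : 0 < δ)
    (g b0 b1 : Fin l → ℝ) (c0 c1 : ℝ) (lam : ℝ) (hlam : 0 < lam) :
    letI q : ℝ := g ⬝ᵥ H⁻¹ *ᵥ g
    letI r0 : ℝ := g ⬝ᵥ H⁻¹ *ᵥ b0
    letI r1 : ℝ := g ⬝ᵥ H⁻¹ *ᵥ b1
    letI s0 : ℝ := b0 ⬝ᵥ H⁻¹ *ᵥ b0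
    letI s1 : ℝ := b1 ⬝ᵥ H⁻¹ *ᵥ b1
    letI t : ℝ := b0 ⬝ᵥ H⁻¹ *ᵥ b1
    s0 * s1 - t ^ 2 ≠ 0 →
    letI ν0star : ℝ := (lam * (s1 * c0 - t * c1) + t * r1 - s1 * r0) / (s0 * s1 - t ^ 2)
    letI ν1star : ℝ := (lam * (s0 * c1 - t * c0) + t * r0 - s0 * r1) / (s0 * s1 - t ^ 2)
    letI w : Fin l → ℝ := g + ν0star • b0 + ν1star • b1
    (-(1 / (2 * lam)) * (w ⬝ᵥ H⁻¹ *ᵥ w) + ν0star * c0 + ν1star * c1 - lam * δ =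
      (1 / (2 * lam)) *
          ((s1 * r0 ^ 2 + s0 * r1 ^ 2 - 2 * t * r0 * r1) / (s0 * s1 - t ^ 2) - q) +
        (lam / 2) *
          ((s1 * c0 ^ 2 + s0 * c1 ^ 2 - 2 * t * c0 * c1) / (s0 * s1 - t ^ 2) - 2 * δ) +
        (t * r1 * c0 + t * r0 * c1 - s1 * r0 * c0 - s0 * r1 * c1) / (s0 * s1 - t ^ 2)) :=
  stmt_8_general l H hHsymm δ g b0 b1 c0 c1 lam hlam
end
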